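/- Fixed projections commute with all extracted observables: let P ∈ B(H) be an orthogonal projection with R(P) = P (equivalently, T(P ⊗ 1) = P). Then for every Y ∈ B(K), [T(1 ⊗ Y), P] = 0. -/

import Mathlib

open ContinuousLinearMap

/-! The Hilbert tensor product `H ⊗ K` is modelled by a Hilbert space `L` together
with two commuting unital ⋆-homomorphisms `ι₁ : B(H) → B(L)` and `ι₂ : B(K) → B(L)`
(playing the roles of `X ↦ X ⊗ 1` and `Y ↦ 1 ⊗ Y`). Given an isometry
`V : H → L`, the quantum operation is `T(X) = V† X V` and its restriction to the
system is `R(P) = T(ι₁ P)`. -/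

variable {H K L : Type*}
  [NormedAddCommGroup H] [InnerProductSpace ℂ H] [CompleteSpace H]
  [NormedAddCommGroup K] [InnerProductSpace ℂ K] [CompleteSpace K]
  [NormedAddCommGroup L] [InnerProductSpace ℂ L] [CompleteSpace L]

/-- The quantum operation `T(X) = V† X V` in Stinespring form. -/
noncomputable def qop (V : H →L[ℂ] L) (X : L →L[ℂ] L) : H →L[ℂ] H :=
  adjoint V ∘L X ∘L V

/-! Compressing the projection `Q = ι₁ P` by the isometry `V` gives back the projection `P`,
which forces `V` to intertwine them: `Q V = V P`, hence also `V† Q = P V†`. For `X` commuting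
with `Q` this yields `V† X V P = V† X Q V = V† Q X V = P V† X V`. -/

theorem isSelfAdjoint_qop (V : H →L[ℂ] L) {Q : L →L[ℂ] L} (hQ : IsSelfAdjoint Q) :
    IsSelfAdjoint (qop V Q) :=
  hQ.adjoint_conj V

theorem comp_eq_comp_qop_of_isIdempotentElem {V : H →L[ℂ] L} (hV : adjoint V ∘L V = 1)
    {Q : L →L[ℂ] L} (hQ : IsStarProjection Q) (hP : IsIdempotentElem (qop V Q)) :
    Q ∘L V = V ∘L qop V Q := by
  set P := qop V Q
  have hPsa : adjoint P = P := (isSelfAdjoint_qop V hQ.isSelfAdjoint).adjoint_eq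
  have hQQ : (adjoint V ∘L Q) ∘L Q = adjoint V ∘L Q := by
    rw [comp_assoc, ← mul_def, hQ.isIdempotentElem.eq]
  have hVV : (P ∘L adjoint V) ∘L V = P := by rw [comp_assoc, hV, one_def, comp_id]
  have hVQV : (adjoint V ∘L Q) ∘L V = P := comp_assoc _ _ _
  have hPVQV : ((P ∘L adjoint V) ∘L Q) ∘L V = P ∘L P := by simp only [comp_assoc]; rfl
  -- `D = Q V - V P` has `D† D = P - P² = 0`
  rw [← sub_eq_zero, ← adjoint_comp_self_eq_zero_iff]
  simp only [map_sub, adjoint_comp, hQ.isSelfAdjoint.adjoint_eq, hPsa, sub_comp, comp_sub,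
    ← comp_assoc]
  rw [hQQ, hVQV, hVV, hPVQV, ← mul_def, hP.eq]
  abel

theorem commute_qop_of_comp_eq_comp {V : H →L[ℂ] L} {Q X : L →L[ℂ] L} {P : H →L[ℂ] H}
    (hQ : IsSelfAdjoint Q) (hP : IsSelfAdjoint P) (hQV : Q ∘L V = V ∘L P)
    (hXQ : Commute X Q) : Commute (qop V X) P := by
  have hVQ : adjoint V ∘L Q = P ∘L adjoint V := by
    simpa only [adjoint_comp, hQ.adjoint_eq, hP.adjoint_eq] using congrArg adjoint hQV
  calc adjoint V ∘L X ∘L V ∘L P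
      = adjoint V ∘L (X * Q) ∘L V := by rw [← hQV]; rfl
    _ = (adjoint V ∘L Q) ∘L X ∘L V := by rw [hXQ.eq]; rfl
    _ = P ∘L adjoint V ∘L X ∘L V := by rw [hVQ]; rfl

/-- Fixed projections commute with all extracted observables: if `P` is an orthogonal
projection with `R(P) = T(P ⊗ 1) = P`, then `[T(1 ⊗ Y), P] = 0` for every `Y ∈ B(K)`. -/
theorem fixed_projection_commutes
    (ι₁ : (H →L[ℂ] H) →⋆ₐ[ℂ] (L →L[ℂ] L)) (ι₂ : (K →L[ℂ] K) →⋆ₐ[ℂ] (L →L[ℂ] L))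
    (hcomm : ∀ X Y, ι₁ X * ι₂ Y = ι₂ Y * ι₁ X)
    (V : H →L[ℂ] L) (hV : adjoint V ∘L V = 1)
    (P : H →L[ℂ] H) (hPproj : IsIdempotentElem P) (hPsa : IsSelfAdjoint P)
    (hfix : qop V (ι₁ P) = P) :
    ∀ Y : K →L[ℂ] K, qop V (ι₂ Y) ∘L P - P ∘L qop V (ι₂ Y) = 0 := by
  intro Y
  have hQ : IsStarProjection (ι₁ P) := (IsStarProjection.mk hPproj hPsa).map ι₁
  have hQV : ι₁ P ∘L V = V ∘L P := by
    simpa only [hfix] using comp_eq_comp_qop_of_isIdempotentElem hV hQ (by rwa [hfix])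
  exact sub_eq_zero.mpr (commute_qop_of_comp_eq_comp hQ.isSelfAdjoint hPsa hQV (hcomm P Y).symm)
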